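/- arXiv:1506.08626 — 5 statements merged into one kernel-verified Lean document; each statement's English description precedes it below -/
import Mathlib

section
/- Chain rule for chain differentials: Let X, Y, Z be real locally convex topological vector spaces, g : X → Y and f : Y → Z. Suppose g has chain differential δg(x;η) at the point x ∈ X in the direction η ∈ X, and f has chain differential δf(g(x); δg(x;η)) at the point g(x) in the direction δg(x;η). Then the composition f ∘ g has a chain differential at x in the direction η, and δ(f ∘ g)(x;η) = δf(g(x); δg(x;η)). -/
open Filter Topology

/-- `f` has chain differential `v` at the point `x` in the direction `η`:
for every sequence `ηm → η` and every sequence of nonzero reals `θm → 0`,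
`θm⁻¹ • (f (x + θm • ηm) - f x) → v`. -/
def HasChainDiff {X Y : Type*} [AddCommGroup X] [Module ℝ X] [TopologicalSpace X]
    [AddCommGroup Y] [Module ℝ Y] [TopologicalSpace Y]
    (f : X → Y) (x η : X) (v : Y) : Prop :=
  ∀ (ηm : ℕ → X) (θm : ℕ → ℝ), Tendsto ηm atTop (𝓝 η) → (∀ m, θm m ≠ 0) →
    Tendsto θm atTop (𝓝 (0 : ℝ)) →
    Tendsto (fun m => (θm m)⁻¹ • (f (x + θm m • ηm m) - f x)) atTop (𝓝 v)

theorem chain_rule_general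
    {X Y Z : Type*}
    [AddCommGroup X] [Module ℝ X] [TopologicalSpace X]
    [AddCommGroup Y] [Module ℝ Y] [TopologicalSpace Y]
    [AddCommGroup Z] [Module ℝ Z] [TopologicalSpace Z]
    (g : X → Y) (f : Y → Z) (x η : X) (u : Y) (w : Z)
    (hg : HasChainDiff g x η u) (hf : HasChainDiff f (g x) u w) :
    HasChainDiff (f ∘ g) x η w := by
  intro ηm θm hηm hθ hθ0
  -- The difference quotients of `g` form a sequence of directions `ζm → u` admissible for `f`.
  set ζm : ℕ → Y := fun m => (θm m)⁻¹ • (g (x + θm m • ηm m) - g x)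
  have hζm : Tendsto ζm atTop (𝓝 u) := hg ηm θm hηm hθ hθ0
  have hgζ : ∀ m, g (x + θm m • ηm m) = g x + θm m • ζm m := fun m => by
    simp only [ζm, smul_inv_smul₀ (hθ m), add_sub_cancel]
  simpa only [Function.comp_apply, hgζ] using hf ζm θm hζm hθ hθ0

/-- Chain rule for chain differentials (Bernhard). -/
theorem chain_rule
    {X Y Z : Type*}
    [AddCommGroup X] [Module ℝ X] [TopologicalSpace X] [IsTopologicalAddGroup X]
    [ContinuousSMul ℝ X] [LocallyConvexSpace ℝ X]
    [AddCommGroup Y] [Module ℝ Y] [TopologicalSpace Y] [IsTopologicalAddGroup Y]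
    [ContinuousSMul ℝ Y] [LocallyConvexSpace ℝ Y]
    [AddCommGroup Z] [Module ℝ Z] [TopologicalSpace Z] [IsTopologicalAddGroup Z]
    [ContinuousSMul ℝ Z] [LocallyConvexSpace ℝ Z]
    (g : X → Y) (f : Y → Z) (x η : X) (u : Y) (w : Z)
    (hg : HasChainDiff g x η u) (hf : HasChainDiff f (g x) u w) :
    HasChainDiff (f ∘ g) x η w :=
  chain_rule_general g f x η u w hg hf
end

section
/- Total chain differential: Let X₁, …, Xₙ and Y be real locally convex topological vector spaces, f : X₁ × … × Xₙ → Y, x ∈ X₁ × … × Xₙ, and η = (η₁, …, ηₙ) ∈ X₁ × … × Xₙ. Suppose for each 1 ≤ i ≤ n that (1) the partial chain differential δ_i f(z; ξ) exists for every point z in some open neighbourhood Ω of x and every direction ξ ∈ X_i, and (2) the map (z, ξ) ↦ δ_i f(z; ξ) is continuous on Ω × X_i. Then f has a (total) chain differential at x in the direction η, and δf(x; η) = Σ_{i=1}^n δ_i f(x; η_i). -/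
/-!
Change one coordinate at a time, so that `f (x + θ • η) - f x` telescopes into `n` increments
along single coordinates. Each increment divided by `θ` is a slope of `f` along a segment of
length `|θ|` in the `i`-th coordinate. Composed with a continuous linear functional, `f` is
differentiable along such a segment with derivative given by the partial chain differential, so
the real mean value theorem and Hahn–Banach separation put the slope in every open convex set
that contains the partial differentials along the segment. Joint continuity of `D i` at
`(x, η i)`, together with local convexity of `Y`, then makes each slope converge to
`D i x (η i)`.
-/

open Filter Topology

/-- Partial chain differential of `f` with respect to the `i`-th coordinate,
at the point `z` in the direction `ξ`. -/
def HasPartialChainDiff {ι : Type*} [DecidableEq ι] {X : ι → Type*} {Y : Type*}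
    [∀ i, AddCommGroup (X i)] [∀ i, Module ℝ (X i)] [∀ i, TopologicalSpace (X i)]
    [AddCommGroup Y] [Module ℝ Y] [TopologicalSpace Y]
    (f : (∀ i, X i) → Y) (i : ι) (z : ∀ i, X i) (ξ : X i) (v : Y) : Prop :=
  HasChainDiff (fun t => f (Function.update z i t)) (z i) ξ v

open Set Function

section MeanValue

variable {Y : Type*} [AddCommGroup Y] [Module ℝ Y] [TopologicalSpace Y]
  [IsTopologicalAddGroup Y] [ContinuousSMul ℝ Y]

theorem slope_mem_of_forall_hasDerivAt_clm_comp {g g' : ℝ → Y} {a b : ℝ} (hab : a ≠ b)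
    {V : Set Y} (hVc : Convex ℝ V) (hVo : IsOpen V)
    (hg : ∀ ℓ : StrongDual ℝ Y, ∀ t ∈ uIcc a b, HasDerivAt (fun s => ℓ (g s)) (ℓ (g' t)) t)
    (hg' : ∀ t ∈ uIcc a b, g' t ∈ V) : slope g a b ∈ V := by
  wlog hlt : a < b generalizing a b
  · rw [slope_comm]
    rw [uIcc_comm] at hg hg'
    exact this hab.symm hg hg' (lt_of_le_of_ne (not_lt.mp hlt) hab.symm)
  by_contra hout
  obtain ⟨ℓ, hℓ⟩ := geometric_hahn_banach_open_point hVc hVo hout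
  have hI : Icc a b ⊆ uIcc a b := Icc_subset_uIcc
  obtain ⟨c, hc, hmvt⟩ :=
    exists_hasDerivAt_eq_slope (fun s => ℓ (g s)) (fun t => ℓ (g' t)) hlt
    (fun t ht => (hg ℓ t (hI ht)).continuousAt.continuousWithinAt)
    (fun t ht => hg ℓ t (hI (Ioo_subset_Icc_self ht)))
  have hℓc : ℓ (slope g a b) = ℓ (g' c) := by
    rw [hmvt, slope_def_module, map_smul, map_sub, smul_eq_mul, div_eq_inv_mul]
  exact (hℓ _ (hg' c (hI (Ioo_subset_Icc_self hc)))).ne hℓc.symm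

end MeanValue

section ChainDiff

variable {X Y : Type*} [AddCommGroup X] [Module ℝ X] [TopologicalSpace X]
  [AddCommGroup Y] [Module ℝ Y] [TopologicalSpace Y] {f : X → Y} {x η : X} {v : Y}

theorem HasChainDiff.tendsto_slope (h : HasChainDiff f x η v) :
    Tendsto (fun t : ℝ => t⁻¹ • (f (x + t • η) - f x)) (𝓝[≠] 0) (𝓝 v) := by
  refine tendsto_iff_seq_tendsto.mpr fun θ hθ => ?_
  obtain ⟨hθ0, hθne⟩ := tendsto_nhdsWithin_iff.mp hθ
  obtain ⟨N, hN⟩ := eventually_atTop.mp hθne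
  rw [← tendsto_add_atTop_iff_nat N]
  exact h _ _ tendsto_const_nhds (fun k => hN _ (Nat.le_add_left N k))
    (hθ0.comp (tendsto_add_atTop_nat N))

theorem HasChainDiff.hasDerivAt_clm_comp {s : ℝ} (h : HasChainDiff f (x + s • η) η v)
    (ℓ : StrongDual ℝ Y) : HasDerivAt (fun t => ℓ (f (x + t • η))) (ℓ v) s := by
  rw [hasDerivAt_iff_tendsto_slope_zero]
  refine ((ℓ.continuous.tendsto v).comp h.tendsto_slope).congr fun t => ?_
  simp only [comp_apply, map_smul, map_sub, add_smul, add_assoc]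

end ChainDiff

theorem Filter.Tendsto.eventually_forall_uIcc_mem {α β : Type*} [TopologicalSpace α]
    {l : Filter β} {a : α} {S : Set (α × ℝ)} {u : β → α} {θ : β → ℝ} (hu : Tendsto u l (𝓝 a))
    (hθ : Tendsto θ l (𝓝 0)) (hS : S ∈ 𝓝 (a, 0)) :
    ∀ᶠ m in l, ∀ s ∈ uIcc 0 (θ m), (u m, s) ∈ S := by
  obtain ⟨A, hA, B, hB, hAB⟩ := mem_nhds_prod_iff.mp hS
  filter_upwards [hu hA, tendsto_smallSets_iff.mp (tendsto_const_nhds.uIcc hθ) B hB]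
    with m hm hmB s hs using hAB ⟨hm, hmB hs⟩

section Partial

variable {ι : Type*} [DecidableEq ι] {X : ι → Type*} {Y : Type*}
  [∀ i, AddCommGroup (X i)] [∀ i, Module ℝ (X i)] [∀ i, TopologicalSpace (X i)]
  [AddCommGroup Y] [Module ℝ Y] [TopologicalSpace Y]

theorem hasPartialChainDiff_update_iff {f : (∀ i, X i) → Y} {i : ι} {z : ∀ i, X i}
    {a ξ : X i} {v : Y} :
    HasPartialChainDiff f i (update z i a) ξ v ↔
      HasChainDiff (fun u => f (update z i u)) a ξ v := by
  simp [HasPartialChainDiff]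

variable [∀ i, IsTopologicalAddGroup (X i)] [∀ i, ContinuousSMul ℝ (X i)]
  [IsTopologicalAddGroup Y] [ContinuousSMul ℝ Y] [LocallyConvexSpace ℝ Y]

theorem tendsto_slope_update_of_partialChainDiff {f : (∀ i, X i) → Y} {Ω : Set (∀ i, X i)}
    (hΩ : IsOpen Ω) {x : ∀ i, X i} (hx : x ∈ Ω) {i : ι} {D : (∀ j, X j) → X i → Y}
    (hD : ∀ z ∈ Ω, ∀ ξ : X i, HasPartialChainDiff f i z ξ (D z ξ))
    (hDcont : ContinuousOn (fun p : (∀ j, X j) × X i => D p.1 p.2) (Ω ×ˢ univ))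
    {z : ℕ → ∀ j, X j} (hz : Tendsto z atTop (𝓝 x)) {ξ : X i} {ξm : ℕ → X i}
    (hξ : Tendsto ξm atTop (𝓝 ξ)) {θ : ℕ → ℝ} (hθ0 : ∀ m, θ m ≠ 0)
    (hθ : Tendsto θ atTop (𝓝 0)) :
    Tendsto (fun m => (θ m)⁻¹ • (f (update (z m) i (z m i + θ m • ξm m)) - f (z m)))
      atTop (𝓝 (D x ξ)) := by
  let γ : ((∀ j, X j) × X i) × ℝ → ∀ j, X j :=
    fun p => update p.1.1 i (p.1.1 i + p.2 • p.1.2)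
  have hγcont : Continuous γ := by fun_prop
  refine (LocallyConvexSpace.convex_basis (𝕜 := ℝ) (D x ξ)).tendsto_right_iff.mpr
    fun V ⟨hV, hVc⟩ => ?_
  have hDat : ContinuousAt (fun p : (∀ j, X j) × X i => D p.1 p.2) (x, ξ) :=
    hDcont.continuousAt (prod_mem_nhds (hΩ.mem_nhds hx) univ_mem)
  have hnhds : Ω ×ˢ univ ∩ (fun q => D q.1 q.2) ⁻¹' interior V ∈ 𝓝 (x, ξ) :=
    inter_mem (prod_mem_nhds (hΩ.mem_nhds hx) univ_mem)
      (hDat.preimage_mem_nhds (interior_mem_nhds.mpr hV))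
  have hS : (fun p => (γ p, p.1.2)) ⁻¹' (Ω ×ˢ univ ∩ (fun q => D q.1 q.2) ⁻¹' interior V)
      ∈ 𝓝 ((x, ξ), (0 : ℝ)) := by
    refine (hγcont.prodMk continuous_fst.snd).continuousAt.preimage_mem_nhds ?_
    simpa [γ] using hnhds
  filter_upwards [(hz.prodMk_nhds hξ).eventually_forall_uIcc_mem hθ hS] with m hm
  have hslope := slope_mem_of_forall_hasDerivAt_clm_comp (g := fun s => f (γ ((z m, ξm m), s)))
    (g' := fun s => D (γ ((z m, ξm m), s)) (ξm m)) (hθ0 m).symm hVc.interior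
    isOpen_interior (fun ℓ t ht => ?_) (fun t ht => (hm t ht).2)
  · simpa [slope_def_module, γ] using interior_subset hslope
  · exact (hasPartialChainDiff_update_iff.mp (hD _ (hm t ht).1.1 _)).hasDerivAt_clm_comp ℓ

end Partial

section Telescope

variable {n : ℕ} {X : Fin n → Type*} [∀ i, AddCommGroup (X i)]

def addBelow (x h : ∀ i, X i) (k : ℕ) : ∀ i, X i :=
  fun j => if (j : ℕ) < k then x j + h j else x j

theorem addBelow_zero (x h : ∀ i, X i) : addBelow x h 0 = x := by
  funext j
  simp [addBelow]

theorem addBelow_of_le (x h : ∀ i, X i) {k : ℕ} (hk : n ≤ k) : addBelow x h k = x + h := by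
  funext j
  simp [addBelow, j.isLt.trans_le hk]

theorem update_addBelow (x h : ∀ i, X i) (i : Fin n) :
    update (addBelow x h i) i (addBelow x h i i + h i) = addBelow x h (i + 1) := by
  funext j
  rcases lt_trichotomy (j : ℕ) i with hj | hj | hj
  · simp [addBelow, hj, Nat.lt_succ_of_lt hj, ne_of_lt (Fin.lt_def.mpr hj)]
  · obtain rfl := Fin.ext hj
    simp [addBelow]
  · simp [addBelow, hj.not_gt, Nat.not_lt.mpr hj, ne_of_gt (Fin.lt_def.mpr hj)]

theorem sub_eq_sum_addBelow {Y : Type*} [AddCommGroup Y] (f : (∀ i, X i) → Y)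
    (x h : ∀ i, X i) :
    f (x + h) - f x = ∑ i : Fin n, (f (addBelow x h (i + 1)) - f (addBelow x h i)) := by
  rw [Fin.sum_univ_eq_sum_range (fun k => f (addBelow x h (k + 1)) - f (addBelow x h k)),
    Finset.sum_range_sub (fun k => f (addBelow x h k)), addBelow_of_le x h le_rfl, addBelow_zero]

theorem tendsto_addBelow [∀ i, TopologicalSpace (X i)] [∀ i, IsTopologicalAddGroup (X i)]
    {β : Type*} {l : Filter β} {h : β → ∀ i, X i} (hh : Tendsto h l (𝓝 0)) (x : ∀ i, X i)
    (k : ℕ) : Tendsto (fun m => addBelow x (h m) k) l (𝓝 x) := by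
  have hcont : Continuous fun h => addBelow x h k :=
    continuous_pi fun j => by unfold addBelow; split_ifs <;> fun_prop
  have hzero : addBelow x 0 k = x := by
    funext j
    simp [addBelow]
  exact (hcont.tendsto' 0 x hzero).comp hh

end Telescope

theorem total_chain_differential_general
    {n : ℕ} {X : Fin n → Type*} {Y : Type*}
    [∀ i, AddCommGroup (X i)] [∀ i, Module ℝ (X i)] [∀ i, TopologicalSpace (X i)]
    [∀ i, IsTopologicalAddGroup (X i)] [∀ i, ContinuousSMul ℝ (X i)]
    [AddCommGroup Y] [Module ℝ Y] [TopologicalSpace Y] [IsTopologicalAddGroup Y]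
    [ContinuousSMul ℝ Y] [LocallyConvexSpace ℝ Y]
    (f : (∀ i, X i) → Y) (x η : ∀ i, X i)
    (Ω : Set (∀ i, X i)) (hΩ : IsOpen Ω) (hx : x ∈ Ω)
    (D : ∀ i, (∀ j, X j) → X i → Y)
    (hD : ∀ i, ∀ z ∈ Ω, ∀ ξ : X i, HasPartialChainDiff f i z ξ (D i z ξ))
    (hDcont : ∀ i, ContinuousOn (fun p : (∀ j, X j) × X i => D i p.1 p.2)
      (Ω ×ˢ (Set.univ : Set (X i)))) :
    HasChainDiff f x η (∑ i, D i x (η i)) := by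
  intro ηm θm hηm hθ0 hθ
  have hstep : Tendsto (fun m => θm m • ηm m) atTop (𝓝 0) := by
    simpa using hθ.smul hηm
  have hterm : ∀ i : Fin n, Tendsto (fun m => (θm m)⁻¹ •
      (f (addBelow x (θm m • ηm m) (i + 1)) - f (addBelow x (θm m • ηm m) i)))
      atTop (𝓝 (D i x (η i))) := fun i => by
    simpa only [← update_addBelow, Pi.smul_apply] using
      tendsto_slope_update_of_partialChainDiff hΩ hx (hD i) (hDcont i)
        (tendsto_addBelow hstep x i) (tendsto_pi_nhds.mp hηm i) hθ0 hθ
  refine (tendsto_finsetSum _ fun i _ => hterm i).congr fun m => ?_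
  rw [← Finset.smul_sum, ← sub_eq_sum_addBelow]

/-- Total chain differential: if all partial chain differentials of `f` exist on an
open neighbourhood `Ω` of `x` and are jointly continuous there, then `f` has a total
chain differential at `x`, equal to the sum of the partial chain differentials. -/
theorem total_chain_differential
    {n : ℕ} {X : Fin n → Type*} {Y : Type*}
    [∀ i, AddCommGroup (X i)] [∀ i, Module ℝ (X i)] [∀ i, TopologicalSpace (X i)]
    [∀ i, IsTopologicalAddGroup (X i)] [∀ i, ContinuousSMul ℝ (X i)]
    [∀ i, LocallyConvexSpace ℝ (X i)]
    [AddCommGroup Y] [Module ℝ Y] [TopologicalSpace Y] [IsTopologicalAddGroup Y]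
    [ContinuousSMul ℝ Y] [LocallyConvexSpace ℝ Y]
    (f : (∀ i, X i) → Y) (x η : ∀ i, X i)
    (Ω : Set (∀ i, X i)) (hΩ : IsOpen Ω) (hx : x ∈ Ω)
    (D : ∀ i, (∀ j, X j) → X i → Y)
    (hD : ∀ i, ∀ z ∈ Ω, ∀ ξ : X i, HasPartialChainDiff f i z ξ (D i z ξ))
    (hDcont : ∀ i, ContinuousOn (fun p : (∀ j, X j) × X i => D i p.1 p.2)
      (Ω ×ˢ (Set.univ : Set (X i)))) :
    HasChainDiff f x η (∑ i, D i x (η i)) :=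
  total_chain_differential_general f x η Ω hΩ hx D hD hDcont
end

section
/- Total chain differential in two real-valued variables: Let X₁ and X₂ be real locally convex topological vector spaces, f : X₁ × X₂ → ℝ, x = (x₁, x₂) ∈ X₁ × X₂, and (η, ξ) ∈ X₁ × X₂. Suppose that for i = 1, 2 the partial chain differential δ_i f(z; ·) exists at every point z in some open neighbourhood Ω of x in every direction, and that the maps (z, ν) ↦ δ₁ f(z; ν) and (z, ν) ↦ δ₂ f(z; ν) are continuous on Ω × X₁ and Ω × X₂ respectively. Then f has a chain differential at x in the direction (η, ξ), and δf(x; (η, ξ)) = δ₁ f(x; η) + δ₂ f(x; ξ). -/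
/-!
Write `a, b` for the components of the direction sequence and split the difference quotient as
`θ⁻¹ (f (x₁ + θ a, x₂ + θ b) - f (x₁, x₂ + θ b)) + θ⁻¹ (f (x₁, x₂ + θ b) - f (x₁, x₂))`.
The second summand tends to `δ₂f(x; ξ)` by the partial chain differential at `x` itself.
Along `s ↦ x₁ + s θ a` the chain differential makes `f (·, x₂ + θ b)` differentiable, so the
mean value theorem turns the first summand into `δ₁f(zₘ; aₘ)` for a point `zₘ` on that segment;
since `zₘ → x`, continuity of `δ₁f` gives the limit `δ₁f(x; η)`.
-/

open Filter Topology

open Set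

namespace HasChainDiff

variable {X Y : Type*} [AddCommGroup X] [Module ℝ X] [TopologicalSpace X]

theorem tendsto_of_eventually_ne [AddCommGroup Y] [Module ℝ Y] [TopologicalSpace Y]
    {f : X → Y} {x η : X} {v : Y} (h : HasChainDiff f x η v) {ηm : ℕ → X} {θm : ℕ → ℝ}
    (hη : Tendsto ηm atTop (𝓝 η)) (hθ0 : ∀ᶠ m in atTop, θm m ≠ 0)
    (hθ : Tendsto θm atTop (𝓝 0)) :
    Tendsto (fun m => (θm m)⁻¹ • (f (x + θm m • ηm m) - f x)) atTop (𝓝 v) := by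
  obtain ⟨N, hN⟩ := eventually_atTop.1 hθ0
  rw [← tendsto_add_atTop_iff_nat N] at hη hθ ⊢
  exact h _ _ hη (fun m => hN _ (Nat.le_add_left N m)) hθ

theorem hasDerivAt [NormedAddCommGroup Y] [NormedSpace ℝ Y] {g : X → Y} {p ν : X} {v : Y}
    {t₀ : ℝ} (h : HasChainDiff g (p + t₀ • ν) ν v) :
    HasDerivAt (fun t : ℝ => g (p + t • ν)) v t₀ := by
  rw [hasDerivAt_iff_tendsto_slope_zero, tendsto_iff_seq_tendsto]
  intro θm hθm
  rw [tendsto_nhdsWithin_iff] at hθm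
  simpa [Function.comp_def, add_smul, add_assoc] using
    h.tendsto_of_eventually_ne tendsto_const_nhds hθm.2 hθm.1

theorem exists_sub_eq_mul {g : X → ℝ} {p ν : X} {θ : ℝ} {D : ℝ → ℝ}
    (h : ∀ s ∈ Icc (0 : ℝ) 1, HasChainDiff g (p + (s * θ) • ν) ν (D s)) :
    ∃ c ∈ Icc (0 : ℝ) 1, g (p + θ • ν) - g p = θ * D c := by
  have hderiv : ∀ s ∈ Icc (0 : ℝ) 1,
      HasDerivAt (fun s : ℝ => g (p + (s * θ) • ν)) (D s * θ) s := fun s hs =>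
    HasDerivAt.comp (h₂ := fun t : ℝ => g (p + t • ν)) s (h s hs).hasDerivAt
      (hasDerivAt_mul_const θ)
  obtain ⟨c, hc, hslope⟩ := exists_hasDerivAt_eq_slope _ _ one_pos
    (fun s hs => (hderiv s hs).continuousAt.continuousWithinAt)
    (fun s hs => hderiv s (Ioo_subset_Icc_self hs))
  refine ⟨c, Ioo_subset_Icc_self hc, ?_⟩
  simpa [mul_comm] using hslope.symm

end HasChainDiff

/-- Convergence along `atTop ×ˢ 𝓟 (Icc 0 1)` is convergence uniform in `s ∈ [0, 1]`. -/
theorem tendsto_add_mul_smul_prod_Icc {E : Type*} [AddCommGroup E] [Module ℝ E]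
    [TopologicalSpace E] [ContinuousAdd E] [ContinuousSMul ℝ E] (p : E) {θm : ℕ → ℝ}
    (hθ : Tendsto θm atTop (𝓝 0)) {am : ℕ → E} {η : E} (ha : Tendsto am atTop (𝓝 η)) :
    Tendsto (fun q : ℕ × ℝ => p + (q.2 * θm q.1) • am q.1)
      (atTop ×ˢ 𝓟 (Icc 0 1)) (𝓝 p) := by
  have hsθ : Tendsto (fun q : ℕ × ℝ => q.2 * θm q.1) (atTop ×ˢ 𝓟 (Icc 0 1)) (𝓝 0) := by
    refine squeeze_zero_norm' ?_ (by simpa using (hθ.comp tendsto_fst).norm)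
    filter_upwards [tendsto_snd (mem_principal_self (Icc (0 : ℝ) 1))] with q hq
    rw [norm_mul]
    exact mul_le_of_le_one_left (norm_nonneg _) ((Real.norm_of_nonneg hq.1).trans_le hq.2)
  simpa using tendsto_const_nhds.add (hsθ.smul (ha.comp tendsto_fst))

theorem tendsto_partialQuotient_fst {X T : Type*} [AddCommGroup X] [Module ℝ X]
    [TopologicalSpace X] [ContinuousAdd X] [ContinuousSMul ℝ X] [TopologicalSpace T]
    {f : X × T → ℝ} {x : X × T} {η : X} {Ω : Set (X × T)} (hΩ : Ω ∈ 𝓝 x)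
    {D : X × T → X → ℝ} (hD : ∀ z ∈ Ω, ∀ ν : X, HasChainDiff (fun t => f (t, z.2)) z.1 ν (D z ν))
    (hDcont : ContinuousAt (fun p : (X × T) × X => D p.1 p.2) (x, η))
    {am : ℕ → X} {ym : ℕ → T} {θm : ℕ → ℝ} (ha : Tendsto am atTop (𝓝 η))
    (hy : Tendsto ym atTop (𝓝 x.2)) (hθ0 : ∀ m, θm m ≠ 0) (hθ : Tendsto θm atTop (𝓝 0)) :
    Tendsto (fun m => (θm m)⁻¹ * (f (x.1 + θm m • am m, ym m) - f (x.1, ym m))) atTop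
      (𝓝 (D x η)) := by
  let z : ℕ × ℝ → X × T := fun q => (x.1 + (q.2 * θm q.1) • am q.1, ym q.1)
  have hz : Tendsto z (atTop ×ˢ 𝓟 (Icc 0 1)) (𝓝 x) :=
    (tendsto_add_mul_smul_prod_Icc x.1 hθ ha).prodMk_nhds (hy.comp tendsto_fst)
  have hzΩ : ∀ᶠ m in atTop, ∀ s ∈ Icc (0 : ℝ) 1, z (m, s) ∈ Ω :=
    eventually_prod_principal_iff.1 (hz.eventually_mem hΩ)
  have hmvt : ∀ᶠ m in atTop, ∃ c ∈ Icc (0 : ℝ) 1,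
      f (x.1 + θm m • am m, ym m) - f (x.1, ym m) = θm m * D (z (m, c)) (am m) := by
    filter_upwards [hzΩ] with m hm
    exact HasChainDiff.exists_sub_eq_mul (g := fun t => f (t, ym m))
      (D := fun s => D (z (m, s)) (am m)) fun s hs => hD _ (hm s hs) _
  obtain ⟨c, hc⟩ := hmvt.choice
  have hcz : Tendsto (fun m => z (m, c m)) atTop (𝓝 x) :=
    hz.comp (tendsto_id.prodMk (tendsto_principal.2 (hc.mono fun m hm => hm.1)))
  refine (hDcont.tendsto.comp (hcz.prodMk_nhds ha)).congr' ?_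
  filter_upwards [hc] with m hm
  rw [hm.2, inv_mul_cancel_left₀ (hθ0 m)]
  rfl

theorem total_chain_differential_two_vars_general
    {X₁ X₂ : Type*}
    [AddCommGroup X₁] [Module ℝ X₁] [TopologicalSpace X₁] [IsTopologicalAddGroup X₁]
    [ContinuousSMul ℝ X₁]
    [AddCommGroup X₂] [Module ℝ X₂] [TopologicalSpace X₂] [IsTopologicalAddGroup X₂]
    [ContinuousSMul ℝ X₂]
    (f : X₁ × X₂ → ℝ) (x : X₁ × X₂) (η : X₁) (ξ : X₂)
    (Ω : Set (X₁ × X₂)) (hΩ : IsOpen Ω) (hx : x ∈ Ω)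
    (D₁ : X₁ × X₂ → X₁ → ℝ) (D₂ : X₁ × X₂ → X₂ → ℝ)
    (hD₁ : ∀ z ∈ Ω, ∀ ν : X₁, HasChainDiff (fun t => f (t, z.2)) z.1 ν (D₁ z ν))
    (hD₂ : ∀ z ∈ Ω, ∀ ν : X₂, HasChainDiff (fun t => f (z.1, t)) z.2 ν (D₂ z ν))
    (hD₁cont : ContinuousOn (fun p : (X₁ × X₂) × X₁ => D₁ p.1 p.2)
      (Ω ×ˢ (Set.univ : Set X₁))) :
    HasChainDiff f x (η, ξ) (D₁ x η + D₂ x ξ) := by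
  intro ηm θm hη hθ0 hθ
  have ha : Tendsto (fun m => (ηm m).1) atTop (𝓝 η) := (continuous_fst.tendsto _).comp hη
  have hb : Tendsto (fun m => (ηm m).2) atTop (𝓝 ξ) := (continuous_snd.tendsto _).comp hη
  have hy : Tendsto (fun m => x.2 + θm m • (ηm m).2) atTop (𝓝 x.2) := by
    simpa using tendsto_const_nhds.add (hθ.smul hb)
  have hfirst := tendsto_partialQuotient_fst (hΩ.mem_nhds hx) hD₁
    (hD₁cont.continuousAt (prod_mem_nhds (hΩ.mem_nhds hx) univ_mem)) ha hy hθ0 hθ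
  have hsecond := hD₂ x hx ξ _ θm hb hθ0 hθ
  refine (hfirst.add hsecond).congr fun m => ?_
  rw [smul_eq_mul, smul_eq_mul, ← mul_add, sub_add_sub_cancel]
  rfl

/-- Total chain differential in two variables: if both partial chain differentials of
`f : X₁ × X₂ → ℝ` exist on an open neighbourhood `Ω` of `x` and are jointly continuous
there, then `f` has a chain differential at `x` in the direction `(η, ξ)`, equal to
`δ₁f(x;η) + δ₂f(x;ξ)`. -/
theorem total_chain_differential_two_vars
    {X₁ X₂ : Type*}
    [AddCommGroup X₁] [Module ℝ X₁] [TopologicalSpace X₁] [IsTopologicalAddGroup X₁]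
    [ContinuousSMul ℝ X₁] [LocallyConvexSpace ℝ X₁]
    [AddCommGroup X₂] [Module ℝ X₂] [TopologicalSpace X₂] [IsTopologicalAddGroup X₂]
    [ContinuousSMul ℝ X₂] [LocallyConvexSpace ℝ X₂]
    (f : X₁ × X₂ → ℝ) (x : X₁ × X₂) (η : X₁) (ξ : X₂)
    (Ω : Set (X₁ × X₂)) (hΩ : IsOpen Ω) (hx : x ∈ Ω)
    (D₁ : X₁ × X₂ → X₁ → ℝ) (D₂ : X₁ × X₂ → X₂ → ℝ)
    (hD₁ : ∀ z ∈ Ω, ∀ ν : X₁, HasChainDiff (fun t => f (t, z.2)) z.1 ν (D₁ z ν))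
    (hD₂ : ∀ z ∈ Ω, ∀ ν : X₂, HasChainDiff (fun t => f (z.1, t)) z.2 ν (D₂ z ν))
    (hD₁cont : ContinuousOn (fun p : (X₁ × X₂) × X₁ => D₁ p.1 p.2)
      (Ω ×ˢ (Set.univ : Set X₁)))
    (hD₂cont : ContinuousOn (fun p : (X₁ × X₂) × X₂ => D₂ p.1 p.2)
      (Ω ×ˢ (Set.univ : Set X₂))) :
    HasChainDiff f x (η, ξ) (D₁ x η + D₂ x ξ) :=
  total_chain_differential_two_vars_general f x η ξ Ω hΩ hx D₁ D₂ hD₁ hD₂ hD₁cont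
end

section
/- General higher-order product rule (Leibniz rule for chain differentials): Let X be a real locally convex topological vector space, and let f : X → ℝ and g : X → ℝ have higher-order chain differentials δ^{|I|} f(x; (η_i)_{i∈I}) and δ^{|I|} g(x; (η_i)_{i∈I}) at the point x ∈ X in all the sequences of directions indexed by every subset I ⊆ {1,…,n} of a fixed family of directions η₁, …, ηₙ ∈ X. Then the pointwise product f · g has an n-th order chain differential at x in the directions η₁, …, ηₙ, and δⁿ(f · g)(x; η₁, …, ηₙ) = Σ_{π ⊆ {1,…,n}} δ^{|π|} f(x; (η_i)_{i∈π}) · δ^{n−|π|} g(x; (η_i)_{i∈π^c}), where the sum ranges over all subsets π of {1,…,n} and π^c = {1,…,n} \ π. -/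
open Filter Topology

/-- `n`-th order chain differential, defined recursively: `δⁿ f(x; η₁,…,ηₙ)` is the
chain differential of `y ↦ δ^{n-1} f(y; η₁,…,η_{n-1})` (a function defined on a
neighbourhood of `x`) at `x` in the direction `ηₙ`; by convention `δ⁰ f(x) = f x`. -/
def HasChainDiffN {X Y : Type*} [AddCommGroup X] [Module ℝ X] [TopologicalSpace X]
    [AddCommGroup Y] [Module ℝ Y] [TopologicalSpace Y]
    (f : X → Y) : (n : ℕ) → (Fin n → X) → X → Y → Prop
  | 0, _, x, v => f x = v
  | n + 1, η, x, v => ∃ D : X → Y,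
      (∀ᶠ y in 𝓝 x, HasChainDiffN f n (Fin.init η) y (D y)) ∧
      HasChainDiff D x (η (Fin.last n)) v

/-- The directions `(η_i)_{i ∈ I}`, listed in increasing order of the index. -/
def dirsOf {X : Type*} {n : ℕ} (η : Fin n → X) (I : Finset (Fin n)) : Fin I.card → X :=
  fun j => η ((I.orderIsoOfFin rfl j : I) : Fin n)

/-!
Induct on the index set `I`, adding its largest element `i` last. By definition, the
`|I|`-th chain differential in the directions indexed by `insert i K` is the first-order
chain differential in the direction `η i` of `y ↦ δ^{|K|} F(y; (η_j)_{j ∈ K})`. Applying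
the first-order product and sum rules to the Leibniz sum for `K` yields, after splitting the
subsets of `insert i K` according to whether they contain `i`, the Leibniz sum for
`insert i K`.
-/

open Finset

theorem Finset.sum_powerset_insert_sdiff {α M : Type*} [DecidableEq α] [AddCommMonoid M]
    {s : Finset α} {a : α} (ha : a ∉ s) (h : Finset α → Finset α → M) :
    ∑ t ∈ (insert a s).powerset, h t (insert a s \ t) =
      ∑ t ∈ s.powerset, (h (insert a t) (s \ t) + h t (insert a (s \ t))) := by
  rw [sum_powerset_insert ha, sum_add_distrib, add_comm]
  congr 1 <;> refine sum_congr rfl fun t ht => ?_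
  · rw [insert_sdiff_insert, sdiff_insert_of_notMem ha]
  · rw [insert_sdiff_of_notMem _ (notMem_mono (mem_powerset.1 ht) ha)]

theorem Fin.strictMono_snoc {α : Type*} [Preorder α] {k : ℕ} {f : Fin k → α}
    (hf : StrictMono f) {a : α} (ha : ∀ j, f j < a) :
    StrictMono (Fin.snoc f a : Fin (k + 1) → α) := by
  intro p q hpq
  induction q using Fin.lastCases with
  | last =>
    induction p using Fin.lastCases with
    | last => exact absurd hpq (lt_irrefl _)
    | cast p => simpa only [Fin.snoc_castSucc, Fin.snoc_last] using ha p
  | cast q =>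
    induction p using Fin.lastCases with
    | last => exact absurd hpq (not_lt.2 (Fin.castSucc_lt_last q).le)
    | cast p => simpa only [Fin.snoc_castSucc] using hf (Fin.castSucc_lt_castSucc_iff.1 hpq)

section DirsOf

variable {X : Type*} {n : ℕ}

theorem dirsOf_eq_comp (η : Fin n → X) (I : Finset (Fin n)) :
    dirsOf η I = η ∘ I.orderEmbOfFin rfl :=
  funext fun j => by rw [dirsOf, coe_orderIsoOfFin_apply, Function.comp_apply]

theorem dirsOf_apply (η : Fin n → X) (I : Finset (Fin n)) {k : ℕ} (h : I.card = k)
    (j : Fin I.card) : dirsOf η I j = η (I.orderEmbOfFin h (Fin.cast h j)) := by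
  rw [dirsOf_eq_comp]
  exact congrArg η (orderEmbOfFin_eq_orderEmbOfFin_iff.2 rfl)

theorem dirsOf_univ (η : Fin n → X) : dirsOf η univ = η ∘ Fin.cast (card_fin n) := by
  have hid : (id : Fin n → Fin n) = univ.orderEmbOfFin (card_fin n) :=
    orderEmbOfFin_unique _ (fun _ => mem_univ _) strictMono_id
  funext j
  rw [dirsOf_apply η univ (card_fin n), ← hid]
  rfl

theorem dirsOf_insert_of_forall_lt (η : Fin n → X) {K : Finset (Fin n)} {i : Fin n}
    (hK : ∀ j ∈ K, j < i) :
    dirsOf η (insert i K) = Fin.snoc (dirsOf η K) (η i) ∘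
      Fin.cast (card_insert_of_notMem fun hi => lt_irrefl i (hK i hi)) := by
  have hcard := card_insert_of_notMem fun hi => lt_irrefl i (hK i hi)
  have hemb : (Fin.snoc (K.orderEmbOfFin rfl) i : Fin (K.card + 1) → Fin n) =
      (insert i K).orderEmbOfFin hcard := by
    refine orderEmbOfFin_unique hcard (fun j => ?_)
      (Fin.strictMono_snoc (K.orderEmbOfFin rfl).strictMono fun j => hK _ (by simp))
    induction j using Fin.lastCases <;> simp
  funext j
  rw [dirsOf_apply η _ hcard, ← hemb, Function.comp_apply, dirsOf_eq_comp, ← Fin.comp_snoc]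
  rfl

end DirsOf

section ChainDiff

variable {X Y : Type*} [AddCommGroup X] [Module ℝ X] [TopologicalSpace X]
  [AddCommGroup Y] [Module ℝ Y] [TopologicalSpace Y]

theorem tendsto_add_smul_nhds [ContinuousAdd X] [ContinuousSMul ℝ X] (x : X) {η : X}
    {ηm : ℕ → X} {θm : ℕ → ℝ} (hη : Tendsto ηm atTop (𝓝 η))
    (hθ : Tendsto θm atTop (𝓝 (0 : ℝ))) :
    Tendsto (fun m => x + θm m • ηm m) atTop (𝓝 x) := by
  simpa using tendsto_const_nhds.add (hθ.smul hη)

theorem HasChainDiff.unique [T2Space Y] {f : X → Y} {x η : X} {v w : Y}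
    (hv : HasChainDiff f x η v) (hw : HasChainDiff f x η w) : v = w := by
  have hθ : Tendsto (fun m : ℕ => 1 / ((m : ℝ) + 1)) atTop (𝓝 0) :=
    tendsto_one_div_add_atTop_nhds_zero_nat
  have hθ0 : ∀ m : ℕ, 1 / ((m : ℝ) + 1) ≠ 0 := fun m => by positivity
  exact tendsto_nhds_unique (hv _ _ tendsto_const_nhds hθ0 hθ)
    (hw _ _ tendsto_const_nhds hθ0 hθ)

theorem HasChainDiff.congr_of_eventuallyEq [ContinuousAdd X] [ContinuousSMul ℝ X]
    {f f₁ : X → Y} {x η : X} {v : Y} (h : HasChainDiff f x η v) (h₁ : f₁ =ᶠ[𝓝 x] f) :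
    HasChainDiff f₁ x η v := by
  intro ηm θm hη hθ0 hθ
  refine (h ηm θm hη hθ0 hθ).congr' ?_
  filter_upwards [(tendsto_add_smul_nhds x hη hθ).eventually h₁] with m hm
  rw [hm, h₁.self_of_nhds]

theorem HasChainDiff.tendsto_apply [ContinuousAdd Y] [ContinuousSMul ℝ Y] {f : X → Y}
    {x η : X} {v : Y} (h : HasChainDiff f x η v) {ηm : ℕ → X} {θm : ℕ → ℝ}
    (hη : Tendsto ηm atTop (𝓝 η)) (hθ0 : ∀ m, θm m ≠ 0)
    (hθ : Tendsto θm atTop (𝓝 (0 : ℝ))) :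
    Tendsto (fun m => f (x + θm m • ηm m)) atTop (𝓝 (f x)) := by
  have hdiff : Tendsto (fun m => θm m • (θm m)⁻¹ • (f (x + θm m • ηm m) - f x))
      atTop (𝓝 ((0 : ℝ) • v)) := hθ.smul (h ηm θm hη hθ0 hθ)
  simp only [smul_inv_smul₀ (hθ0 _), zero_smul] at hdiff
  simpa using hdiff.add_const (f x)

theorem HasChainDiff.sum [ContinuousAdd Y] {ι : Type*} {s : Finset ι} {f : ι → X → Y}
    {v : ι → Y} {x η : X} (h : ∀ p ∈ s, HasChainDiff (f p) x η (v p)) :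
    HasChainDiff (fun y => ∑ p ∈ s, f p y) x η (∑ p ∈ s, v p) := by
  intro ηm θm hη hθ0 hθ
  refine (tendsto_finsetSum s fun p hp => h p hp ηm θm hη hθ0 hθ).congr fun m => ?_
  rw [← sum_sub_distrib, smul_sum]

theorem HasChainDiff.mul {f g : X → ℝ} {x η : X} {a b : ℝ} (hf : HasChainDiff f x η a)
    (hg : HasChainDiff g x η b) :
    HasChainDiff (fun y => f y * g y) x η (a * g x + f x * b) := by
  intro ηm θm hη hθ0 hθ
  refine ((hf ηm θm hη hθ0 hθ).mul (hg.tendsto_apply hη hθ0 hθ) |>.add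
    (tendsto_const_nhds.mul (hg ηm θm hη hθ0 hθ))).congr fun m => ?_
  simp only [smul_eq_mul]
  ring

open Classical in
noncomputable def chainDiffN (f : X → Y) (k : ℕ) (d : Fin k → X) (y : X) : Y :=
  if h : ∃ v, HasChainDiffN f k d y v then h.choose else 0

theorem hasChainDiffN_chainDiffN {f : X → Y} {k : ℕ} {d : Fin k → X} {y : X}
    (h : ∃ v, HasChainDiffN f k d y v) : HasChainDiffN f k d y (chainDiffN f k d y) := by
  rw [chainDiffN, dif_pos h]
  exact h.choose_spec

theorem chainDiffN_zero (f : X → Y) (d : Fin 0 → X) (y : X) : chainDiffN f 0 d y = f y := by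
  have h : HasChainDiffN f 0 d y (chainDiffN f 0 d y) := hasChainDiffN_chainDiffN ⟨f y, rfl⟩
  exact h.symm

theorem hasChainDiffN_comp_cast {f : X → Y} {k k' : ℕ} (h : k = k') (d : Fin k' → X) {x : X}
    {v : Y} : HasChainDiffN f k (d ∘ Fin.cast h) x v ↔ HasChainDiffN f k' d x v := by
  subst h
  rfl

variable [ContinuousAdd X] [ContinuousSMul ℝ X] [T2Space Y]

theorem HasChainDiffN.unique {f : X → Y} {k : ℕ} {d : Fin k → X} {x : X} {v w : Y}
    (hv : HasChainDiffN f k d x v) (hw : HasChainDiffN f k d x w) : v = w := by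
  induction k generalizing x v w with
  | zero => exact hv.symm.trans hw
  | succ k ih =>
    obtain ⟨D, hD, hDv⟩ := hv
    obtain ⟨D', hD', hD'w⟩ := hw
    have hDD' : D =ᶠ[𝓝 x] D' := by
      filter_upwards [hD, hD'] with y hy hy' using ih hy hy'
    exact (hDv.congr_of_eventuallyEq hDD'.symm).unique hD'w

theorem HasChainDiffN.chainDiffN_eq {f : X → Y} {k : ℕ} {d : Fin k → X} {y : X} {v : Y}
    (h : HasChainDiffN f k d y v) : chainDiffN f k d y = v :=
  (hasChainDiffN_chainDiffN ⟨v, h⟩).unique h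

theorem hasChainDiffN_succ_iff {f : X → Y} {k : ℕ} {d : Fin (k + 1) → X} {x : X} {v : Y} :
    HasChainDiffN f (k + 1) d x v ↔
      (∀ᶠ y in 𝓝 x, ∃ w, HasChainDiffN f k (Fin.init d) y w) ∧
      HasChainDiff (chainDiffN f k (Fin.init d)) x (d (Fin.last k)) v := by
  constructor
  · rintro ⟨D, hD, hDv⟩
    refine ⟨hD.mono fun y hy => ⟨D y, hy⟩, hDv.congr_of_eventuallyEq ?_⟩
    filter_upwards [hD] with y hy using hy.chainDiffN_eq
  · rintro ⟨hex, hv⟩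
    exact ⟨_, hex.mono fun y hy => hasChainDiffN_chainDiffN hy, hv⟩

theorem hasChainDiffN_dirsOf_insert_iff {n : ℕ} {f : X → Y} {η : Fin n → X}
    {K : Finset (Fin n)} {i : Fin n} (hK : ∀ j ∈ K, j < i) {x : X} {v : Y} :
    HasChainDiffN f (insert i K).card (dirsOf η (insert i K)) x v ↔
      (∀ᶠ y in 𝓝 x, ∃ w, HasChainDiffN f K.card (dirsOf η K) y w) ∧
      HasChainDiff (chainDiffN f K.card (dirsOf η K)) x (η i) v := by
  rw [dirsOf_insert_of_forall_lt η hK, hasChainDiffN_comp_cast, hasChainDiffN_succ_iff,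
    Fin.init_snoc, Fin.snoc_last]

end ChainDiff

section Leibniz

variable {X : Type*} [AddCommGroup X] [Module ℝ X] [TopologicalSpace X]
  [ContinuousAdd X] [ContinuousSMul ℝ X] {n : ℕ}

noncomputable def leibnizSum (f g : X → ℝ) (η : Fin n → X) (I : Finset (Fin n)) (y : X) :
    ℝ :=
  ∑ π ∈ I.powerset,
    chainDiffN f π.card (dirsOf η π) y * chainDiffN g (I \ π).card (dirsOf η (I \ π)) y

theorem hasChainDiffN_mul_dirsOf (η : Fin n → X) {f g : X → ℝ} (I : Finset (Fin n)) {x : X}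
    (hf : ∀ J ⊆ I, ∃ v, HasChainDiffN f J.card (dirsOf η J) x v)
    (hg : ∀ J ⊆ I, ∃ v, HasChainDiffN g J.card (dirsOf η J) x v) :
    HasChainDiffN (fun u => f u * g u) I.card (dirsOf η I) x (leibnizSum f g η I x) := by
  induction I using Finset.induction_on_max generalizing x with
  | empty =>
    show f x * g x = leibnizSum f g η ∅ x
    rw [leibnizSum, powerset_empty, sum_singleton, sdiff_empty]
    exact (congrArg₂ (· * ·) (chainDiffN_zero f _ x) (chainDiffN_zero g _ x)).symm
  | insert i K hK ih =>
    have hiK : i ∉ K := fun hi => lt_irrefl i (hK i hi)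
    have hlower : ∀ F : X → ℝ,
        (∀ J ⊆ insert i K, ∃ v, HasChainDiffN F J.card (dirsOf η J) x v) →
        ∀ J ⊆ K, (∀ᶠ y in 𝓝 x, ∃ w, HasChainDiffN F J.card (dirsOf η J) y w) ∧
          HasChainDiff (chainDiffN F J.card (dirsOf η J)) x (η i)
            (chainDiffN F (insert i J).card (dirsOf η (insert i J)) x) := by
      intro F hF J hJ
      obtain ⟨v, hv⟩ := hF (insert i J) (insert_subset_insert i hJ)
      rw [hv.chainDiffN_eq]
      exact (hasChainDiffN_dirsOf_insert_iff fun j hj => hK j (hJ hj)).1 hv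
    have hnear : ∀ᶠ y in 𝓝 x,
        HasChainDiffN (fun u => f u * g u) K.card (dirsOf η K) y (leibnizSum f g η K y) := by
      have hex : ∀ F : X → ℝ,
          (∀ J ⊆ insert i K, ∃ v, HasChainDiffN F J.card (dirsOf η J) x v) →
          ∀ᶠ y in 𝓝 x, ∀ J ∈ K.powerset, ∃ w, HasChainDiffN F J.card (dirsOf η J) y w :=
        fun F hF =>
          (eventually_all_finset _).2 fun J hJ => (hlower F hF J (mem_powerset.1 hJ)).1
      filter_upwards [hex f hf, hex g hg] with y hfy hgy
      exact ih (fun J hJ => hfy J (mem_powerset.2 hJ)) (fun J hJ => hgy J (mem_powerset.2 hJ))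
    have hsum : HasChainDiff (leibnizSum f g η K) x (η i) (leibnizSum f g η (insert i K) x) := by
      rw [leibnizSum, sum_powerset_insert_sdiff hiK
        (fun s t => chainDiffN f s.card (dirsOf η s) x * chainDiffN g t.card (dirsOf η t) x)]
      exact HasChainDiff.sum fun π hπ => ((hlower f hf π (mem_powerset.1 hπ)).2.mul
        (hlower g hg (K \ π) sdiff_subset).2)
    refine (hasChainDiffN_dirsOf_insert_iff hK).2 ⟨hnear.mono fun y hy => ⟨_, hy⟩, ?_⟩
    exact hsum.congr_of_eventuallyEq (hnear.mono fun y hy => hy.chainDiffN_eq)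

end Leibniz

theorem product_rule_higher_order_general
    {X : Type*}
    [AddCommGroup X] [Module ℝ X] [TopologicalSpace X] [IsTopologicalAddGroup X]
    [ContinuousSMul ℝ X]
    (n : ℕ) (f g : X → ℝ) (x : X) (η : Fin n → X)
    (Df Dg : Finset (Fin n) → ℝ)
    (hf : ∀ I : Finset (Fin n), HasChainDiffN f I.card (dirsOf η I) x (Df I))
    (hg : ∀ I : Finset (Fin n), HasChainDiffN g I.card (dirsOf η I) x (Dg I)) :
    HasChainDiffN (fun u => f u * g u) n η x (∑ π : Finset (Fin n), Df π * Dg πᶜ) := by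
  have H := hasChainDiffN_mul_dirsOf η univ (x := x) (fun J _ => ⟨Df J, hf J⟩)
    (fun J _ => ⟨Dg J, hg J⟩)
  have hsum : leibnizSum f g η univ x = ∑ π : Finset (Fin n), Df π * Dg πᶜ := by
    simp only [leibnizSum, powerset_univ, ← compl_eq_univ_sdiff, (hf _).chainDiffN_eq,
      (hg _).chainDiffN_eq]
  rwa [hsum, dirsOf_univ, hasChainDiffN_comp_cast] at H

/-- General higher-order product rule (Leibniz rule) for chain differentials. -/
theorem product_rule_higher_order
    {X : Type*}
    [AddCommGroup X] [Module ℝ X] [TopologicalSpace X] [IsTopologicalAddGroup X]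
    [ContinuousSMul ℝ X] [LocallyConvexSpace ℝ X]
    (n : ℕ) (f g : X → ℝ) (x : X) (η : Fin n → X)
    (Df Dg : Finset (Fin n) → ℝ)
    (hf : ∀ I : Finset (Fin n), HasChainDiffN f I.card (dirsOf η I) x (Df I))
    (hg : ∀ I : Finset (Fin n), HasChainDiffN g I.card (dirsOf η I) x (Dg I)) :
    HasChainDiffN (fun u => f u * g u) n η x (∑ π : Finset (Fin n), Df π * Dg πᶜ) :=
  product_rule_higher_order_general n f g x η Df Dg hf hg
end

section
/- Mean value identity along a direction: Let X be a real locally convex topological vector space, g : X → ℝ, y ∈ X, ξ ∈ X, and θ > 0 a real number. Suppose that for every t ∈ [0, θ] the chain differential δg(y + t • ξ; ξ) exists. Then there exists c ∈ [0, θ] such that g(y + θ • ξ) − g(y) = θ · δg(y + c • ξ; ξ). -/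
/-! Taking the constant direction sequence in the definition of the chain differential shows that
`t ↦ g (y + t • ξ)` is differentiable on `[0, θ]` with derivative `t ↦ δg(y + t • ξ; ξ)`;
the identity is then the one-variable mean value theorem for this function. -/

open Filter Topology

theorem tendsto_nhdsWithin_of_seq_mem {α β : Type*} [TopologicalSpace α]
    [FirstCountableTopology α] {f : α → β} {s : Set α} {a : α} {l : Filter β}
    (h : ∀ u : ℕ → α, (∀ n, u n ∈ s) → Tendsto u atTop (𝓝 a) → Tendsto (f ∘ u) atTop l) :
    Tendsto f (𝓝[s] a) l := by
  refine tendsto_iff_seq_tendsto.2 fun u hu => ?_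
  obtain ⟨N, hN⟩ := eventually_atTop.1 (eventually_mem_of_tendsto_nhdsWithin hu)
  refine (tendsto_add_atTop_iff_nat N).1 (h (fun n => u (n + N)) (fun n => hN _ le_add_self) ?_)
  exact (tendsto_nhds_of_tendsto_nhdsWithin hu).comp (tendsto_add_atTop_nat N)

theorem HasChainDiff.hasLineDerivAt {X F : Type*} [AddCommGroup X] [Module ℝ X]
    [TopologicalSpace X] [NormedAddCommGroup F] [NormedSpace ℝ F] {f : X → F} {x η : X}
    {v : F} (hf : HasChainDiff f x η v) : HasLineDerivAt ℝ f v x η :=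
  hasLineDerivAt_iff_tendsto_slope_zero.2 <| tendsto_nhdsWithin_of_seq_mem fun _ hθ hθ0 =>
    hf _ _ tendsto_const_nhds hθ hθ0

section LineDeriv

variable {E F : Type*} [AddCommGroup E] [Module ℝ E] [NormedAddCommGroup F] [NormedSpace ℝ F]

theorem HasLineDerivAt.hasDerivAt_add_smul {f : E → F} {f' : F} {x v : E} {t : ℝ}
    (hf : HasLineDerivAt ℝ f f' (x + t • v) v) :
    HasDerivAt (fun s : ℝ => f (x + s • v)) f' t := by
  have h0 : HasDerivAt (fun s : ℝ => f (x + t • v + s • v)) f' (t - t) := by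
    rw [sub_self]; exact hf
  convert h0.comp_sub_const t t using 2 with s
  rw [add_assoc, ← add_smul, add_sub_cancel]

theorem exists_hasLineDerivAt_eq_slope {f : E → ℝ} {f' : ℝ → ℝ} {x v : E} {a b : ℝ}
    (hab : a < b) (hf : ∀ t ∈ Set.Icc a b, HasLineDerivAt ℝ f (f' t) (x + t • v) v) :
    ∃ c ∈ Set.Ioo a b, f' c = (f (x + b • v) - f (x + a • v)) / (b - a) := by
  have hderiv : ∀ t ∈ Set.Icc a b, HasDerivAt (fun s : ℝ => f (x + s • v)) (f' t) t :=
    fun t ht => (hf t ht).hasDerivAt_add_smul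
  exact exists_hasDerivAt_eq_slope _ f' hab
    (fun t ht => (hderiv t ht).continuousAt.continuousWithinAt)
    (fun t ht => hderiv t (Set.Ioo_subset_Icc_self ht))

end LineDeriv

theorem mean_value_identity_general
    {X : Type*}
    [AddCommGroup X] [Module ℝ X] [TopologicalSpace X]
    (g : X → ℝ) (y ξ : X) (θ : ℝ) (hθ : 0 < θ)
    (D : ℝ → ℝ)
    (hD : ∀ t ∈ Set.Icc (0 : ℝ) θ, HasChainDiff g (y + t • ξ) ξ (D t)) :
    ∃ c ∈ Set.Icc (0 : ℝ) θ, g (y + θ • ξ) - g y = θ * D c := by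
  obtain ⟨c, hc, hslope⟩ :=
    exists_hasLineDerivAt_eq_slope hθ fun t ht => (hD t ht).hasLineDerivAt
  refine ⟨c, Set.Ioo_subset_Icc_self hc, ?_⟩
  rw [hslope, zero_smul, add_zero, sub_zero, mul_div_cancel₀ _ hθ.ne']

/-- Mean value identity along a direction. -/
theorem mean_value_identity
    {X : Type*}
    [AddCommGroup X] [Module ℝ X] [TopologicalSpace X] [IsTopologicalAddGroup X]
    [ContinuousSMul ℝ X] [LocallyConvexSpace ℝ X]
    (g : X → ℝ) (y ξ : X) (θ : ℝ) (hθ : 0 < θ)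
    (D : ℝ → ℝ)
    (hD : ∀ t ∈ Set.Icc (0 : ℝ) θ, HasChainDiff g (y + t • ξ) ξ (D t)) :
    ∃ c ∈ Set.Icc (0 : ℝ) θ, g (y + θ • ξ) - g y = θ * D c :=
  mean_value_identity_general g y ξ θ hθ D hD
end
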